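/- arXiv:2604.13411 — 8 statements merged into one kernel-verified Lean document; each statement's English description precedes it below -/
import Mathlib

section
/- Let 0 < δ < 1/2 and V₁ > 0. Then the point E_W = (V₁/(1−δ), 0) is an equilibrium of the two-dimensional ring system, and it is the unique equilibrium: every (r₁, r₂) ∈ ℝ² satisfying −r₁ + F(δ(r₁ − r₂) + V₁) = 0 and −r₂ + F(δ(r₂ − r₁)) = 0 equals (V₁/(1−δ), 0). -/
/-- The two-dimensional ring system with ReLU `F x = max x 0`:
for `0 < δ < 1/2` and `V₁ > 0`, the point `E_W = (V₁/(1-δ), 0)` is an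
equilibrium, and it is the unique equilibrium. -/
theorem stmt0 (δ V₁ : ℝ) (hδ0 : 0 < δ) (hδ : δ < 1/2) (hV : 0 < V₁) :
    (-(V₁ / (1 - δ)) + max (δ * (V₁ / (1 - δ) - 0) + V₁) 0 = 0 ∧
      -(0 : ℝ) + max (δ * (0 - V₁ / (1 - δ))) 0 = 0) ∧
    ∀ r₁ r₂ : ℝ,
      -r₁ + max (δ * (r₁ - r₂) + V₁) 0 = 0 →
      -r₂ + max (δ * (r₂ - r₁)) 0 = 0 →
      r₁ = V₁ / (1 - δ) ∧ r₂ = 0 := by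
  have h1δ : (0:ℝ) < 1 - δ := by linarith
  constructor
  · constructor
    · have hpos : 0 < V₁ / (1 - δ) := div_pos hV h1δ
      rw [max_eq_left (by nlinarith)]
      field_simp
      ring
    · have hpos : 0 < V₁ / (1 - δ) := div_pos hV h1δ
      rw [max_eq_right (by nlinarith)]
      ring
  · intro r₁ r₂ h₁ h₂
    have hr₁ : r₁ = max (δ * (r₁ - r₂) + V₁) 0 := by linarith
    have hr₂ : r₂ = max (δ * (r₂ - r₁)) 0 := by linarith
    have hr₁0 : 0 ≤ r₁ := hr₁ ▸ le_max_right _ _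
    have hr₂0 : r₂ = 0 := by
      rcases le_or_gt (δ * (r₂ - r₁)) 0 with h | h
      · rw [max_eq_right h] at hr₂; exact hr₂
      · rw [max_eq_left h.le] at hr₂
        nlinarith
    subst hr₂0
    refine ⟨?_, rfl⟩
    rcases le_or_gt (δ * (r₁ - 0) + V₁) 0 with h | h
    · rw [max_eq_right h] at hr₁
      nlinarith
    · rw [max_eq_left h.le] at hr₁
      field_simp
      nlinarith
end

section
/- Let 0 < δ < 1/2 and V₁ > 0. Then the equilibrium E_W = (V₁/(1−δ), 0) of the two-dimensional ring system is globally asymptotically stable: for every differentiable function r = (r₁, r₂) : [0, ∞) → ℝ² satisfying r₁'(t) = −r₁(t) + F(δ(r₁(t) − r₂(t)) + V₁) and r₂'(t) = −r₂(t) + F(δ(r₂(t) − r₁(t))) for all t ≥ 0, one has r(t) → (V₁/(1−δ), 0) as t → ∞. -/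
open Filter Real

/-!
Writing `E_W = (V₁/(1-δ), 0)`, the ring system reads `r' = -r + N r` with `N = ringInput δ V₁`.
`N` fixes `E_W` and moves every point at most `2δ` times as far from `E_W` in the sup norm, since
each component of `N` is a ReLU of `δ` times the difference of the coordinates. Hence
`u = eᵗ (r - E_W)` satisfies `‖u'‖ ≤ 2δ ‖u‖`, Grönwall gives `‖u t‖ ≤ ‖u 0‖ e^{2δt}`, and so
`‖r t - E_W‖ ≤ ‖r 0 - E_W‖ e^{(2δ-1)t}`, which decays since `δ < 1/2`.
-/

section Relaxation

variable {E : Type*} [NormedAddCommGroup E] [NormedSpace ℝ E] {N : E → E} {p : E} {K : ℝ}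
  {f : ℝ → E}

theorem norm_sub_le_of_hasDerivAt_neg_add
    (hN : ∀ x, ‖N x - p‖ ≤ K * ‖x - p‖) (hf : ∀ t ≥ 0, HasDerivAt f (-f t + N (f t)) t)
    {t : ℝ} (ht : 0 ≤ t) : ‖f t - p‖ ≤ ‖f 0 - p‖ * exp ((K - 1) * t) := by
  set u : ℝ → E := fun s => exp s • (f s - p)
  have hu : ∀ s ≥ 0, HasDerivAt u (exp s • (N (f s) - p)) s := by
    intro s hs
    refine ((hasDerivAt_exp s).smul ((hf s hs).sub_const p)).congr_deriv ?_
    simp only [smul_add, smul_sub, smul_neg]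
    abel
  have hnorm_u : ∀ s, ‖u s‖ = exp s * ‖f s - p‖ := fun s => by
    simp only [u, norm_smul, norm_of_nonneg (exp_pos s).le]
  have hu_bound : ∀ s, ‖exp s • (N (f s) - p)‖ ≤ K * ‖u s‖ := fun s => by
    rw [hnorm_u, norm_smul, norm_of_nonneg (exp_pos s).le, mul_left_comm]
    exact mul_le_mul_of_nonneg_left (hN (f s)) (exp_pos s).le
  have hgronwall : ‖u t‖ ≤ ‖u 0‖ * exp (K * t) := by
    have := norm_le_gronwallBound_of_norm_deriv_right_le (ε := 0)
      (fun s hs => (hu s hs.1).continuousAt.continuousWithinAt)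
      (fun s hs => (hu s hs.1).hasDerivWithinAt) le_rfl
      (fun s _ => by simpa using hu_bound s) t ⟨ht, le_rfl⟩
    rwa [gronwallBound_ε0, sub_zero] at this
  rw [hnorm_u, hnorm_u, exp_zero, one_mul] at hgronwall
  calc ‖f t - p‖ = exp (-t) * (exp t * ‖f t - p‖) := by
        rw [← mul_assoc, ← exp_add, neg_add_cancel, exp_zero, one_mul]
    _ ≤ exp (-t) * (‖f 0 - p‖ * exp (K * t)) := by gcongr
    _ = ‖f 0 - p‖ * exp ((K - 1) * t) := by
        rw [mul_left_comm, ← exp_add]; ring_nf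

theorem tendsto_of_hasDerivAt_neg_add (hK : K < 1)
    (hN : ∀ x, ‖N x - p‖ ≤ K * ‖x - p‖) (hf : ∀ t ≥ 0, HasDerivAt f (-f t + N (f t)) t) :
    Tendsto f atTop (nhds p) := by
  rw [tendsto_iff_norm_sub_tendsto_zero]
  have hdecay : Tendsto (fun t => ‖f 0 - p‖ * exp ((K - 1) * t)) atTop (nhds 0) := by
    have := tendsto_exp_atBot.comp (tendsto_id.const_mul_atTop_of_neg (sub_neg.2 hK))
    simpa using this.const_mul ‖f 0 - p‖
  refine squeeze_zero' (Eventually.of_forall fun t => norm_nonneg _) ?_ hdecay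
  filter_upwards [eventually_ge_atTop 0] with t ht
  exact norm_sub_le_of_hasDerivAt_neg_add hN hf ht

end Relaxation

section RingSystem

def ringInput (δ V₁ : ℝ) (x : ℝ × ℝ) : ℝ × ℝ :=
  (max (δ * (x.1 - x.2) + V₁) 0, max (δ * (x.2 - x.1)) 0)

variable {δ V₁ : ℝ}

theorem norm_ringInput_sub_le (hδ0 : 0 ≤ δ) (hδ1 : δ < 1) (hV : 0 ≤ V₁) (x : ℝ × ℝ) :
    ‖ringInput δ V₁ x - (V₁ / (1 - δ), 0)‖ ≤ 2 * δ * ‖x - (V₁ / (1 - δ), 0)‖ := by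
  set c := V₁ / (1 - δ)
  have hc : 0 ≤ c := div_nonneg hV (by linarith)
  have hfixed : δ * c + V₁ = c := by
    simp only [c]; field_simp [(by linarith : (1 - δ) ≠ 0)]; ring
  have hdiff : δ * |(x.1 - c) - x.2| ≤ 2 * δ * ‖x - (c, 0)‖ := by
    have h1 : |x.1 - c| ≤ ‖x - (c, 0)‖ := (norm_fst_le (x - (c, 0))).trans_eq' (by simp)
    have h2 : |x.2| ≤ ‖x - (c, 0)‖ := (norm_snd_le (x - (c, 0))).trans_eq' (by simp)
    nlinarith [abs_sub (x.1 - c) x.2]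
  have hfst : |max (δ * (x.1 - x.2) + V₁) 0 - c| ≤ δ * |(x.1 - c) - x.2| := by
    calc |max (δ * (x.1 - x.2) + V₁) 0 - c|
        = |max (δ * (x.1 - x.2) + V₁) 0 - max (δ * c + V₁) 0| := by rw [hfixed, max_eq_left hc]
      _ ≤ |δ * (x.1 - x.2) + V₁ - (δ * c + V₁)| := abs_max_sub_max_le_abs _ _ _
      _ = δ * |(x.1 - c) - x.2| := by
          rw [show δ * (x.1 - x.2) + V₁ - (δ * c + V₁) = δ * ((x.1 - c) - x.2) by ring,
            abs_mul, abs_of_nonneg hδ0]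
  have hsnd : |max (δ * (x.2 - x.1)) 0| ≤ δ * |(x.1 - c) - x.2| := by
    calc |max (δ * (x.2 - x.1)) 0|
        = |max (δ * (x.2 - x.1)) 0 - max (δ * (0 - c)) 0| := by
          rw [max_eq_right (by nlinarith : δ * (0 - c) ≤ 0), sub_zero]
      _ ≤ |δ * (x.2 - x.1) - δ * (0 - c)| := abs_max_sub_max_le_abs _ _ _
      _ = δ * |(x.1 - c) - x.2| := by
          rw [← abs_neg, show -(δ * (x.2 - x.1) - δ * (0 - c)) = δ * ((x.1 - c) - x.2) by ring,
            abs_mul, abs_of_nonneg hδ0]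
  rw [Prod.norm_def]
  simp only [ringInput, Prod.fst_sub, Prod.snd_sub, sub_zero, Real.norm_eq_abs]
  exact max_le (hfst.trans hdiff) (hsnd.trans hdiff)

end RingSystem

/-- Global asymptotic stability of `E_W = (V₁/(1-δ), 0)` for the
two-dimensional ring system when `0 < δ < 1/2` and `V₁ > 0`: every
solution defined on `[0,∞)` converges to `E_W`. -/
theorem stmt1 (δ V₁ : ℝ) (hδ0 : 0 < δ) (hδ : δ < 1/2) (hV : 0 < V₁)
    (r₁ r₂ : ℝ → ℝ)
    (h₁ : ∀ t ≥ (0 : ℝ), HasDerivAt r₁ (-r₁ t + max (δ * (r₁ t - r₂ t) + V₁) 0) t)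
    (h₂ : ∀ t ≥ (0 : ℝ), HasDerivAt r₂ (-r₂ t + max (δ * (r₂ t - r₁ t)) 0) t) :
    Tendsto (fun t => (r₁ t, r₂ t)) atTop (nhds (V₁ / (1 - δ), 0)) :=
  tendsto_of_hasDerivAt_neg_add (N := ringInput δ V₁) (by linarith)
    (norm_ringInput_sub_le hδ0.le (by linarith) hV.le)
    fun t ht => (h₁ t ht).prodMk (h₂ t ht)
end

section
/- Let 1/2 < δ < 1 and V₁ > 0. Then the point E_W = (V₁/(1−δ), 0) is an equilibrium of the two-dimensional ring system and it is locally asymptotically stable: there exists an open neighborhood U of E_W such that every differentiable solution r : [0, ∞) → ℝ² of the system with r(0) ∈ U satisfies r(t) → E_W as t → ∞. -/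
/-!
On the half-plane `r₂ ≤ r₁` both ReLUs are in a fixed regime, and the system becomes linear:
`r₂' = -r₂` and `(r₁ - r₂)' = -(1 - δ) (r₁ - r₂ - V₁/(1-δ))`. This half-plane is forward invariant,
since on its boundary `(r₁ - r₂)' = V₁ > 0`. Both quantities therefore decay exponentially to their
equilibrium values, which gives convergence to `E_W` from the open half-plane `r₂ < r₁`.
-/

open Filter Real Topology

theorem nonneg_of_hasDerivAt_of_pos_at_zeros {u u' : ℝ → ℝ}
    (hu : ∀ t ≥ 0, HasDerivAt u (u' t) t) (hpos : ∀ t ≥ 0, u t = 0 → 0 < u' t)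
    (h0 : 0 ≤ u 0) {t : ℝ} (ht : 0 ≤ t) : 0 ≤ u t := by
  have hle := image_le_of_deriv_right_lt_deriv_boundary (a := 0) (b := t)
    (f := fun s => -u s) (f' := fun s => -u' s) (B := fun _ => 0) (B' := fun _ => 0)
    (fun s hs => (hu s hs.1).continuousAt.neg.continuousWithinAt)
    (fun s hs => (hu s hs.1).neg.hasDerivWithinAt) (by simpa using h0)
    (fun _ => hasDerivAt_const _ _)
    (fun s hs hus => by simpa using hpos s hs.1 (neg_eq_zero.mp hus))
    ⟨ht, le_rfl⟩
  simpa using hle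

theorem eq_exp_mul_of_hasDerivAt_neg_mul {f : ℝ → ℝ} {c : ℝ}
    (hf : ∀ t ≥ 0, HasDerivAt f (-c * f t) t) {t : ℝ} (ht : 0 ≤ t) :
    f t = exp (-(c * t)) * f 0 := by
  have hderiv : ∀ s ≥ 0, HasDerivAt (fun s => exp (c * s) * f s) 0 s := fun s hs => by
    have hexp : HasDerivAt (fun s => exp (c * s)) (exp (c * s) * c) s := by
      simpa using ((hasDerivAt_id s).const_mul c).exp
    exact (hexp.mul (hf s hs)).congr_deriv (by ring)
  have hconst := constant_of_has_deriv_right_zero (a := 0) (b := t)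
    (fun s hs => (hderiv s hs.1).continuousAt.continuousWithinAt)
    (fun s hs => (hderiv s hs.1).hasDerivWithinAt) t ⟨ht, le_rfl⟩
  simp only [mul_zero, exp_zero, one_mul] at hconst
  rw [← hconst, ← mul_assoc, ← exp_add, neg_add_cancel, exp_zero, one_mul]

theorem tendsto_zero_of_hasDerivAt_neg_mul {f : ℝ → ℝ} {c : ℝ} (hc : 0 < c)
    (hf : ∀ t ≥ 0, HasDerivAt f (-c * f t) t) : Tendsto f atTop (𝓝 0) := by
  have hexp : Tendsto (fun t => exp (-(c * t)) * f 0) atTop (𝓝 (0 * f 0)) :=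
    (tendsto_exp_neg_atTop_nhds_zero.comp (tendsto_id.const_mul_atTop hc)).mul_const _
  rw [zero_mul] at hexp
  refine hexp.congr' ?_
  filter_upwards [eventually_ge_atTop 0] with t ht
  exact (eq_exp_mul_of_hasDerivAt_neg_mul hf ht).symm

section RingSystem

variable {δ V₁ : ℝ} {r₁ r₂ : ℝ → ℝ}

theorem ringSystem_sub_nonneg (hV : 0 < V₁)
    (h₁ : ∀ t ≥ (0 : ℝ), HasDerivAt r₁ (-r₁ t + max (δ * (r₁ t - r₂ t) + V₁) 0) t)
    (h₂ : ∀ t ≥ (0 : ℝ), HasDerivAt r₂ (-r₂ t + max (δ * (r₂ t - r₁ t)) 0) t)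
    (h0 : r₂ 0 ≤ r₁ 0) {t : ℝ} (ht : 0 ≤ t) : 0 ≤ r₁ t - r₂ t := by
  refine nonneg_of_hasDerivAt_of_pos_at_zeros (fun s hs => (h₁ s hs).sub (h₂ s hs))
    (fun s _ hs => ?_) (sub_nonneg.mpr h0) ht
  rw [Pi.sub_apply, sub_eq_zero] at hs
  simpa [hs] using hV

theorem ringSystem_tendsto (hδ0 : 0 ≤ δ) (hδ1 : δ < 1) (hV : 0 < V₁)
    (h₁ : ∀ t ≥ (0 : ℝ), HasDerivAt r₁ (-r₁ t + max (δ * (r₁ t - r₂ t) + V₁) 0) t)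
    (h₂ : ∀ t ≥ (0 : ℝ), HasDerivAt r₂ (-r₂ t + max (δ * (r₂ t - r₁ t)) 0) t)
    (h0 : r₂ 0 ≤ r₁ 0) :
    Tendsto (fun t => (r₁ t, r₂ t)) atTop (𝓝 (V₁ / (1 - δ), 0)) := by
  have h1δ : 0 < 1 - δ := by linarith
  have hsub : ∀ t ≥ 0, 0 ≤ r₁ t - r₂ t := fun t ht => ringSystem_sub_nonneg hV h₁ h₂ h0 ht
  have hdecay₂ : ∀ t ≥ 0, HasDerivAt r₂ (-1 * r₂ t) t := fun t ht => by
    convert h₂ t ht using 1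
    rw [max_eq_right (by nlinarith [hsub t ht])]
    ring
  have hdecay₁ : ∀ t ≥ 0, HasDerivAt (fun t => r₁ t - r₂ t - V₁ / (1 - δ))
      (-(1 - δ) * (r₁ t - r₂ t - V₁ / (1 - δ))) t := fun t ht => by
    refine (((h₁ t ht).sub (h₂ t ht)).sub_const (V₁ / (1 - δ))).congr_deriv ?_
    rw [max_eq_left (by nlinarith [hsub t ht]), max_eq_right (by nlinarith [hsub t ht])]
    field_simp
    ring
  have hlim₂ : Tendsto r₂ atTop (𝓝 0) := tendsto_zero_of_hasDerivAt_neg_mul one_pos hdecay₂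
  have hlim₁ : Tendsto r₁ atTop (𝓝 (V₁ / (1 - δ))) := by
    have h := ((tendsto_zero_of_hasDerivAt_neg_mul h1δ hdecay₁).add hlim₂).const_add (V₁ / (1 - δ))
    rw [add_zero, add_zero] at h
    exact h.congr fun t => by ring
  exact hlim₁.prodMk_nhds hlim₂

end RingSystem

/-- For `1/2 < δ < 1` and `V₁ > 0`, the point `E_W = (V₁/(1-δ), 0)` is an
equilibrium of the two-dimensional ring system and is locally asymptotically
stable: there is an open neighborhood `U` of `E_W` such that every solution
starting in `U` converges to `E_W`. -/
theorem stmt2 (δ V₁ : ℝ) (hδ1 : 1/2 < δ) (hδ2 : δ < 1) (hV : 0 < V₁) :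
    (-(V₁ / (1 - δ)) + max (δ * (V₁ / (1 - δ) - 0) + V₁) 0 = 0 ∧
      -(0 : ℝ) + max (δ * (0 - V₁ / (1 - δ))) 0 = 0) ∧
    ∃ U : Set (ℝ × ℝ), IsOpen U ∧ (V₁ / (1 - δ), (0 : ℝ)) ∈ U ∧
      ∀ r₁ r₂ : ℝ → ℝ,
        (∀ t ≥ (0 : ℝ), HasDerivAt r₁ (-r₁ t + max (δ * (r₁ t - r₂ t) + V₁) 0) t) →
        (∀ t ≥ (0 : ℝ), HasDerivAt r₂ (-r₂ t + max (δ * (r₂ t - r₁ t)) 0) t) →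
        (r₁ 0, r₂ 0) ∈ U →
        Tendsto (fun t => (r₁ t, r₂ t)) atTop (nhds (V₁ / (1 - δ), 0)) := by
  have hδ0 : 0 < δ := by linarith
  have ha : 0 < V₁ / (1 - δ) := div_pos hV (by linarith)
  have hfixed : δ * (V₁ / (1 - δ) - 0) + V₁ = V₁ / (1 - δ) := by
    field_simp [(by linarith : (1 : ℝ) - δ ≠ 0)]
    ring
  refine ⟨⟨?_, ?_⟩, {p | p.2 < p.1}, isOpen_lt continuous_snd continuous_fst, ha,
    fun r₁ r₂ h₁ h₂ h0 => ringSystem_tendsto hδ0.le hδ2 hV h₁ h₂ (le_of_lt h0)⟩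
  · rw [hfixed, max_eq_left ha.le, neg_add_cancel]
  · rw [max_eq_right (by nlinarith), neg_zero, zero_add]
end

section
/- Let 1/2 < δ < 1 and V₁ > 0. Then every bounded trajectory of the two-dimensional ring system converges to E_W = (V₁/(1−δ), 0): if r : [0, ∞) → ℝ² is a differentiable solution of the system and there exists M such that ‖r(t)‖ ≤ M for all t ≥ 0, then r(t) → (V₁/(1−δ), 0) as t → ∞. -/
/-!
The difference `S = r₁ - r₂` obeys the autonomous scalar equation
`S' = -S + F(δS + V₁) - F(-δS)` (`ringDiffDrift`), whose right-hand side pushes `S` towards `c = V₁/(1-δ)` at rate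
at least `(1-δ)²`, so `S → c` exponentially. Once `S > 0` the input `F(δ(r₂ - r₁))` vanishes
and `r₂' = -r₂`, so `r₂ → 0` and `r₁ = S + r₂ → c`.
-/

open Filter Set Topology

theorem sq_le_mul_exp_of_mul_deriv_le {g g' : ℝ → ℝ} {a k : ℝ}
    (hg : ∀ t ≥ a, HasDerivAt g (g' t) t) (hle : ∀ t ≥ a, g t * g' t ≤ -k * g t ^ 2) :
    ∀ t ≥ a, g t ^ 2 ≤ g a ^ 2 * Real.exp (-(2 * k * (t - a))) := by
  set ψ : ℝ → ℝ := fun t => Real.exp (2 * k * (t - a)) * g t ^ 2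
  have hψ : ∀ t ≥ a, HasDerivAt ψ
      (Real.exp (2 * k * (t - a)) * (2 * (k * g t ^ 2 + g t * g' t))) t := by
    intro t ht
    have hexp : HasDerivAt (fun u => Real.exp (2 * k * (u - a)))
        (Real.exp (2 * k * (t - a)) * (2 * k)) t := by
      simpa using (((hasDerivAt_id t).sub_const a).const_mul (2 * k)).exp
    refine (hexp.mul ((hg t ht).fun_pow 2)).congr_deriv ?_
    push_cast
    ring
  have hanti : AntitoneOn ψ (Ici a) := by
    refine antitoneOn_of_hasDerivWithinAt_nonpos (convex_Ici a)
      (f' := fun t => Real.exp (2 * k * (t - a)) * (2 * (k * g t ^ 2 + g t * g' t)))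
      (fun t ht => (hψ t ht).continuousAt.continuousWithinAt) (fun t ht => ?_) (fun t ht => ?_)
    all_goals rw [interior_Ici] at ht
    · exact (hψ t ht.le).hasDerivWithinAt
    · have hlet := hle t ht.le
      exact mul_nonpos_of_nonneg_of_nonpos (Real.exp_pos _).le (by linarith)
  intro t ht
  have h := hanti self_mem_Ici ht ht
  simp only [ψ, sub_self, mul_zero, Real.exp_zero, one_mul] at h
  rw [Real.exp_neg, ← div_eq_mul_inv, le_div_iff₀ (Real.exp_pos _), mul_comm]
  exact h

theorem tendsto_zero_of_mul_deriv_le {g g' : ℝ → ℝ} {k : ℝ} (hk : 0 < k)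
    (h : ∀ᶠ t in atTop, HasDerivAt g (g' t) t ∧ g t * g' t ≤ -k * g t ^ 2) :
    Tendsto g atTop (𝓝 0) := by
  obtain ⟨a, ha⟩ := eventually_atTop.1 h
  have hbound := sq_le_mul_exp_of_mul_deriv_le (fun t ht => (ha t ht).1) (fun t ht => (ha t ht).2)
  have hexp : Tendsto (fun t => g a ^ 2 * Real.exp (-(2 * k * (t - a)))) atTop (𝓝 0) := by
    have : Tendsto (fun t => 2 * k * (t - a)) atTop atTop :=
      (tendsto_atTop_add_const_right _ _ tendsto_id).const_mul_atTop (by positivity)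
    simpa using (Real.tendsto_exp_neg_atTop_nhds_zero.comp this).const_mul (g a ^ 2)
  have hsq : Tendsto (fun t => g t ^ 2) atTop (𝓝 0) :=
    squeeze_zero' (Eventually.of_forall fun t => sq_nonneg (g t))
      (eventually_atTop.2 ⟨a, hbound⟩) hexp
  rw [tendsto_zero_iff_abs_tendsto_zero]
  simpa [Function.comp_def, Real.sqrt_sq_eq_abs] using hsq.sqrt

def ringDiffDrift (δ V₁ x : ℝ) : ℝ := -x + max (δ * x + V₁) 0 - max (-(δ * x)) 0

theorem sub_mul_ringDiffDrift_le {δ V₁ : ℝ} (hδ₀ : 0 ≤ δ) (hδ₁ : δ < 1) (hV : 0 ≤ V₁) (x : ℝ) :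
    (x - V₁ / (1 - δ)) * ringDiffDrift δ V₁ x ≤ -(1 - δ) ^ 2 * (x - V₁ / (1 - δ)) ^ 2 := by
  have hε : 0 < 1 - δ := by linarith
  unfold ringDiffDrift
  set c := V₁ / (1 - δ)
  have hc : V₁ = (1 - δ) * c := (mul_div_cancel₀ V₁ hε.ne').symm
  have hc₀ : 0 ≤ c := by positivity
  rcases le_or_gt 0 x with hx | hx
  · rw [max_eq_left (by positivity), max_eq_right (by nlinarith)]
    nlinarith [mul_nonneg (mul_nonneg hδ₀ hε.le) (sq_nonneg (x - c))]
  rcases le_or_gt 0 (δ * x + V₁) with hV' | hV'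
  · rw [max_eq_left hV', max_eq_left (by nlinarith)]
    nlinarith [mul_nonneg (mul_nonneg hδ₀ hV') (by linarith : 0 ≤ c - x)]
  · rw [max_eq_right hV'.le, max_eq_left (by nlinarith)]
    nlinarith [mul_nonneg (mul_nonneg hε.le (by linarith : 0 ≤ -(δ * x) - V₁)) (by linarith : 0 ≤ c - x)]

theorem stmt3_general (δ V₁ : ℝ) (hδ1 : 1/2 < δ) (hδ2 : δ < 1) (hV : 0 < V₁)
    (r₁ r₂ : ℝ → ℝ)
    (h₁ : ∀ t ≥ (0 : ℝ), HasDerivAt r₁ (-r₁ t + max (δ * (r₁ t - r₂ t) + V₁) 0) t)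
    (h₂ : ∀ t ≥ (0 : ℝ), HasDerivAt r₂ (-r₂ t + max (δ * (r₂ t - r₁ t)) 0) t) :
    Tendsto (fun t => (r₁ t, r₂ t)) atTop (nhds (V₁ / (1 - δ), 0)) := by
  have hδ₀ : 0 ≤ δ := by linarith
  have hε : 0 < 1 - δ := by linarith
  set c := V₁ / (1 - δ)
  have hc : 0 < c := div_pos hV hε
  have hS : ∀ t ≥ (0 : ℝ), HasDerivAt (fun t => r₁ t - r₂ t - c)
      (ringDiffDrift δ V₁ (r₁ t - r₂ t)) t := by
    intro t ht
    refine (((h₁ t ht).sub (h₂ t ht)).sub_const c).congr_deriv ?_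
    rw [ringDiffDrift, show δ * (r₂ t - r₁ t) = -(δ * (r₁ t - r₂ t)) by ring]
    ring
  have hSc : Tendsto (fun t => r₁ t - r₂ t - c) atTop (𝓝 0) :=
    tendsto_zero_of_mul_deriv_le (pow_pos hε 2) <| (eventually_ge_atTop 0).mono fun t ht =>
      ⟨hS t ht, sub_mul_ringDiffDrift_le hδ₀ hδ2 hV.le _⟩
  have hgap : ∀ᶠ t in atTop, r₂ t ≤ r₁ t := by
    filter_upwards [hSc.eventually (eventually_ge_nhds (neg_lt_zero.2 hc))] with t ht
    linarith
  have hr₂ : Tendsto r₂ atTop (𝓝 0) := by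
    refine tendsto_zero_of_mul_deriv_le (g' := fun t => -r₂ t + max (δ * (r₂ t - r₁ t)) 0)
      one_pos ?_
    filter_upwards [eventually_ge_atTop 0, hgap] with t ht hle
    refine ⟨h₂ t ht, ?_⟩
    rw [max_eq_right (mul_nonpos_of_nonneg_of_nonpos hδ₀ (by linarith))]
    nlinarith
  have hr₁ : Tendsto r₁ atTop (𝓝 c) := by
    simpa using ((hSc.add hr₂).add_const c).congr fun t => by ring
  exact hr₁.prodMk_nhds hr₂

/-- For `1/2 < δ < 1` and `V₁ > 0`, every bounded trajectory of the
two-dimensional ring system converges to `E_W = (V₁/(1-δ), 0)`. -/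
theorem stmt3 (δ V₁ : ℝ) (hδ1 : 1/2 < δ) (hδ2 : δ < 1) (hV : 0 < V₁)
    (r₁ r₂ : ℝ → ℝ)
    (h₁ : ∀ t ≥ (0 : ℝ), HasDerivAt r₁ (-r₁ t + max (δ * (r₁ t - r₂ t) + V₁) 0) t)
    (h₂ : ∀ t ≥ (0 : ℝ), HasDerivAt r₂ (-r₂ t + max (δ * (r₂ t - r₁ t)) 0) t)
    (M : ℝ) (hM : ∀ t ≥ (0 : ℝ), ‖(r₁ t, r₂ t)‖ ≤ M) :
    Tendsto (fun t => (r₁ t, r₂ t)) atTop (nhds (V₁ / (1 - δ), 0)) :=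
  stmt3_general δ V₁ hδ1 hδ2 hV r₁ r₂ h₁ h₂
end

section
/- Let δ > 1 and V₁ > 0. Then the two-dimensional ring system admits no equilibrium of the form (r₁, 0), and the coexistence point E_C = (V₁(δ−1)/(2δ−1), δV₁/(2δ−1)), which has both coordinates strictly positive, is the unique equilibrium of the system. -/
/-!
On the axis `r₂ = 0` the first equation forces `r₁ = δ r₁ + V₁` with `r₁ ≥ 0`, impossible for
`δ ≥ 1`. Off the axis the second rectifier is active, and then so is the first (otherwise
`r₁ = 0` and `r₂ = δ r₂` forces `r₂ = 0`). The equilibrium therefore solves a linear system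
whose equations add up to `r₁ + r₂ = V₁`, and its solution is `E_C`.
-/

def IsRingEquilibrium (δ V₁ r₁ r₂ : ℝ) : Prop :=
  -r₁ + max (δ * (r₁ - r₂) + V₁) 0 = 0 ∧ -r₂ + max (δ * (r₂ - r₁)) 0 = 0

namespace IsRingEquilibrium

variable {δ V₁ r₁ r₂ : ℝ}

theorem not_right_eq_zero (hδ : 1 ≤ δ) (hV : 0 < V₁) : ¬IsRingEquilibrium δ V₁ r₁ 0 := by
  rintro ⟨h₁, -⟩
  rcases le_total (δ * (r₁ - 0) + V₁) 0 with hA | hA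
  · rw [max_eq_right hA] at h₁
    have hr₁ : r₁ = 0 := by linarith
    rw [hr₁] at hA
    linarith
  · rw [max_eq_left hA] at h₁
    nlinarith

theorem linear (hδ : 1 < δ) (hV : 0 < V₁) (h : IsRingEquilibrium δ V₁ r₁ r₂) :
    r₁ = δ * (r₁ - r₂) + V₁ ∧ r₂ = δ * (r₂ - r₁) := by
  obtain ⟨h₁, h₂⟩ := h
  have hr₂ : r₂ ≠ 0 := by
    rintro rfl
    exact not_right_eq_zero hδ.le hV ⟨h₁, h₂⟩
  have hB : 0 ≤ δ * (r₂ - r₁) := by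
    by_contra! hB
    rw [max_eq_right hB.le] at h₂
    exact hr₂ (by linarith)
  rw [max_eq_left hB] at h₂
  have hA : 0 ≤ δ * (r₁ - r₂) + V₁ := by
    by_contra! hA
    rw [max_eq_right hA.le] at h₁
    have hr₁ : r₁ = 0 := by linarith
    subst hr₁
    have : (δ - 1) * r₂ = 0 := by linarith
    rcases mul_eq_zero.mp this with h | h
    · linarith
    · exact hr₂ h
  rw [max_eq_left hA] at h₁
  constructor <;> linarith

theorem eq_coexistence (hδ : 1 < δ) (hV : 0 < V₁) (h : IsRingEquilibrium δ V₁ r₁ r₂) :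
    r₁ = V₁ * (δ - 1) / (2 * δ - 1) ∧ r₂ = δ * V₁ / (2 * δ - 1) := by
  obtain ⟨h₁, h₂⟩ := h.linear hδ hV
  have hD : 2 * δ - 1 ≠ 0 := by linarith
  constructor <;> rw [eq_div_iff hD]
  · linear_combination (δ - 1) * h₁ + δ * h₂
  · linear_combination δ * h₁ + (δ - 1) * h₂

end IsRingEquilibrium

theorem isRingEquilibrium_coexistence {δ V₁ : ℝ} (hδ : 1 ≤ δ) (hV : 0 ≤ V₁) :
    IsRingEquilibrium δ V₁ (V₁ * (δ - 1) / (2 * δ - 1)) (δ * V₁ / (2 * δ - 1)) := by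
  have hD : 0 < 2 * δ - 1 := by linarith
  have hA : δ * (V₁ * (δ - 1) / (2 * δ - 1) - δ * V₁ / (2 * δ - 1)) + V₁
      = V₁ * (δ - 1) / (2 * δ - 1) := by
    rw [div_sub_div_same, mul_div_assoc', div_add' _ _ _ hD.ne']
    congr 1
    ring
  have hB : δ * (δ * V₁ / (2 * δ - 1) - V₁ * (δ - 1) / (2 * δ - 1))
      = δ * V₁ / (2 * δ - 1) := by
    rw [div_sub_div_same, mul_div_assoc']
    congr 1
    ring
  constructor
  · rw [hA, max_eq_left (div_nonneg (mul_nonneg hV (by linarith)) hD.le)]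
    ring
  · rw [hB, max_eq_left (div_nonneg (mul_nonneg (by linarith) hV) hD.le)]
    ring

/-- For `δ > 1` and `V₁ > 0`: the two-dimensional ring system has no
equilibrium of the form `(r₁, 0)`, the coexistence point
`E_C = (V₁(δ-1)/(2δ-1), δV₁/(2δ-1))` has strictly positive coordinates,
and `E_C` is the unique equilibrium. -/
theorem stmt4 (δ V₁ : ℝ) (hδ : 1 < δ) (hV : 0 < V₁) :
    (∀ r₁ : ℝ,
      ¬(-r₁ + max (δ * (r₁ - 0) + V₁) 0 = 0 ∧
        -(0 : ℝ) + max (δ * (0 - r₁)) 0 = 0)) ∧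
    0 < V₁ * (δ - 1) / (2 * δ - 1) ∧
    0 < δ * V₁ / (2 * δ - 1) ∧
    (-(V₁ * (δ - 1) / (2 * δ - 1)) +
        max (δ * (V₁ * (δ - 1) / (2 * δ - 1) - δ * V₁ / (2 * δ - 1)) + V₁) 0 = 0 ∧
      -(δ * V₁ / (2 * δ - 1)) +
        max (δ * (δ * V₁ / (2 * δ - 1) - V₁ * (δ - 1) / (2 * δ - 1))) 0 = 0) ∧
    ∀ r₁ r₂ : ℝ,
      -r₁ + max (δ * (r₁ - r₂) + V₁) 0 = 0 →
      -r₂ + max (δ * (r₂ - r₁)) 0 = 0 →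
      r₁ = V₁ * (δ - 1) / (2 * δ - 1) ∧ r₂ = δ * V₁ / (2 * δ - 1) := by
  have hD : 0 < 2 * δ - 1 := by linarith
  refine ⟨fun _ => IsRingEquilibrium.not_right_eq_zero hδ.le hV, ?_, ?_,
    isRingEquilibrium_coexistence hδ.le hV.le,
    fun r₁ r₂ h₁ h₂ => IsRingEquilibrium.eq_coexistence hδ hV ⟨h₁, h₂⟩⟩
  · exact div_pos (mul_pos hV (by linarith)) hD
  · exact div_pos (mul_pos (by linarith) hV) hD
end

section
/- Let δ > 1 and V₁ > 0. Then there exists a nonempty open set U ⊆ ℝ² such that every differentiable solution r : [0, ∞) → ℝ² of the two-dimensional ring system with r(0) ∈ U satisfies ‖r(t)‖ → ∞ as t → ∞. -/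
/-!
The difference `s = r₁ - r₂` obeys `s' ≥ (δ - 1) s` everywhere, because the two ReLU terms
differ by at least `δ s` once `V₁ ≥ 0`. Hence `s(t) ≥ s(0) e^{(δ-1)t}`, so on the open
half-plane `r₂ < r₁` the difference, and with it `‖(r₁, r₂)‖ ≥ s / 2`, grows exponentially.
-/

open Filter Real Set

theorem le_max_add_sub_max_neg (a : ℝ) {V : ℝ} (hV : 0 ≤ V) :
    a ≤ max (a + V) 0 - max (-a) 0 := by
  rcases le_total a 0 with ha | ha
  · linarith [le_max_right (a + V) 0, max_eq_left (neg_nonneg.mpr ha)]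
  · linarith [le_max_left (a + V) 0, max_eq_right (neg_nonpos.mpr ha)]

section GrowthBound

variable {f f' : ℝ → ℝ} {c : ℝ}

/-- Grönwall-type lower bound: `t ↦ f t * exp (-c * t)` is monotone on `[0, ∞)`. -/
theorem mul_exp_le_of_mul_le_deriv (hf : ∀ t ≥ 0, HasDerivAt f (f' t) t)
    (hle : ∀ t ≥ 0, c * f t ≤ f' t) {t : ℝ} (ht : 0 ≤ t) :
    f 0 * exp (c * t) ≤ f t := by
  set g : ℝ → ℝ := fun t => f t * exp (-c * t)
  have hg : ∀ t ≥ 0, HasDerivAt g ((f' t - c * f t) * exp (-c * t)) t := fun t ht =>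
    ((hf t ht).mul ((hasDerivAt_id' t).const_mul (-c)).exp).congr_deriv (by ring)
  have hmono : MonotoneOn g (Ici 0) := by
    refine monotoneOn_of_hasDerivWithinAt_nonneg
      (f' := fun t => (f' t - c * f t) * exp (-c * t)) (convex_Ici 0)
      (fun t ht => (hg t ht).continuousAt.continuousWithinAt) (fun t ht => ?_) (fun t ht => ?_)
    · rw [interior_Ici] at ht
      exact (hg t (le_of_lt ht)).hasDerivWithinAt
    · rw [interior_Ici] at ht
      exact mul_nonneg (sub_nonneg.mpr (hle t (le_of_lt ht))) (exp_pos _).le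
  have h0t : g 0 ≤ g t := hmono self_mem_Ici ht ht
  calc f 0 * exp (c * t) = g 0 * exp (c * t) := by simp [g]
    _ ≤ g t * exp (c * t) := by gcongr
    _ = f t := by rw [mul_assoc, ← exp_add]; simp

theorem tendsto_atTop_of_mul_le_deriv (hf : ∀ t ≥ 0, HasDerivAt f (f' t) t)
    (hle : ∀ t ≥ 0, c * f t ≤ f' t) (hc : 0 < c) (hf0 : 0 < f 0) :
    Tendsto f atTop atTop := by
  have hexp : Tendsto (fun t => f 0 * exp (c * t)) atTop atTop :=
    (tendsto_exp_atTop.comp (tendsto_id.const_mul_atTop hc)).const_mul_atTop hf0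
  refine tendsto_atTop_mono' atTop ?_ hexp
  filter_upwards [eventually_ge_atTop 0] with t ht
  exact mul_exp_le_of_mul_le_deriv hf hle ht

end GrowthBound

theorem fst_sub_snd_le_two_mul_norm (p : ℝ × ℝ) : p.1 - p.2 ≤ 2 * ‖p‖ := by
  have h₁ : p.1 ≤ ‖p‖ := (le_abs_self p.1).trans (norm_fst_le p)
  have h₂ : -p.2 ≤ ‖p‖ := (neg_le_abs p.2).trans (norm_snd_le p)
  linarith

/-- For `δ > 1` and `V₁ > 0`, there is a nonempty open set of initial
conditions from which every solution of the two-dimensional ring system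
blows up in norm as `t → ∞`. -/
theorem stmt5 (δ V₁ : ℝ) (hδ : 1 < δ) (hV : 0 < V₁) :
    ∃ U : Set (ℝ × ℝ), IsOpen U ∧ U.Nonempty ∧
      ∀ r₁ r₂ : ℝ → ℝ,
        (∀ t ≥ (0 : ℝ), HasDerivAt r₁ (-r₁ t + max (δ * (r₁ t - r₂ t) + V₁) 0) t) →
        (∀ t ≥ (0 : ℝ), HasDerivAt r₂ (-r₂ t + max (δ * (r₂ t - r₁ t)) 0) t) →
        (r₁ 0, r₂ 0) ∈ U →
        Tendsto (fun t => ‖(r₁ t, r₂ t)‖) atTop atTop := by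
  refine ⟨{p | p.2 < p.1}, isOpen_lt continuous_snd continuous_fst, ⟨(1, 0), by simp⟩, ?_⟩
  intro r₁ r₂ h₁ h₂ h₀
  have hdiff : ∀ t ≥ (0 : ℝ), (δ - 1) * (r₁ t - r₂ t) ≤
      (-r₁ t + max (δ * (r₁ t - r₂ t) + V₁) 0) - (-r₂ t + max (δ * (r₂ t - r₁ t)) 0) := by
    intro t _
    have := le_max_add_sub_max_neg (δ * (r₁ t - r₂ t)) hV.le
    rw [show δ * (r₂ t - r₁ t) = -(δ * (r₁ t - r₂ t)) by ring]
    linarith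
  have hs : Tendsto (fun t => r₁ t - r₂ t) atTop atTop :=
    tendsto_atTop_of_mul_le_deriv (fun t ht => (h₁ t ht).sub (h₂ t ht)) hdiff
      (sub_pos.mpr hδ) (sub_pos.mpr h₀)
  refine tendsto_atTop_mono (fun t => ?_) (hs.atTop_div_const two_pos)
  linarith [fst_sub_snd_le_two_mul_norm (r₁ t, r₂ t)]
end

section
/- Let 0 < δ < 1, c > 0, and 0 < ν < 1 − δ. Then there exists β > 0 such that for all r₁, r₂ ∈ ℝ and for both input configurations (V₁, V₂) = (c, 0) and (V₁, V₂) = (0, c), one has −2(r₁² + r₂²) + r₁·max(δ(r₁ − r₂) + V₁, 0) + r₂·max(δ(r₂ − r₁) + V₂, 0) ≤ −2(1 − δ − ν)(r₁² + r₂²) + β. Consequently, the Lyapunov function V(r₁, r₂) = r₁² + r₂² satisfies a drift inequality of the form ℒV ≤ −αV + β for every α < 2(1 − δ − ν). -/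
/-- Drift estimate for a single cue configuration `(V₁,V₂) = (c,0)`. -/
lemma stmt8_aux (δ c ν r₁ r₂ : ℝ) (hδ0 : 0 < δ) (hν0 : 0 < ν) (hc : 0 < c) :
    -2 * (r₁ ^ 2 + r₂ ^ 2) + r₁ * max (δ * (r₁ - r₂) + c) 0
        + r₂ * max (δ * (r₂ - r₁) + 0) 0
      ≤ -2 * (1 - δ - ν) * (r₁ ^ 2 + r₂ ^ 2) + (c ^ 2 / (2 * ν) + 1) := by
  have hβ : c * r₁ - ν * r₁ ^ 2 ≤ c ^ 2 / (2 * ν) := by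
    rw [le_div_iff₀ (by linarith : (0:ℝ) < 2 * ν)]
    nlinarith [sq_nonneg (c - 2 * ν * r₁)]
  have hd : (0:ℝ) ≤ c ^ 2 / (2 * ν) := by positivity
  rcases le_total (δ * (r₁ - r₂) + c) 0 with h1 | h1 <;>
    rcases le_total (δ * (r₂ - r₁) + 0) 0 with h2 | h2
  · rw [max_eq_right h1, max_eq_right h2]
    nlinarith [sq_nonneg r₁, sq_nonneg r₂]
  · rw [max_eq_right h1, max_eq_left h2]
    nlinarith [mul_nonneg hδ0.le (sq_nonneg (r₁ - r₂)),
      mul_nonneg hδ0.le (sq_nonneg (r₁ + r₂)), sq_nonneg r₁, sq_nonneg r₂,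
      mul_nonneg hν0.le (sq_nonneg r₁), mul_nonneg hν0.le (sq_nonneg r₂)]
  · rw [max_eq_left h1, max_eq_right h2]
    nlinarith [mul_nonneg hδ0.le (sq_nonneg (r₁ - r₂)),
      mul_nonneg hδ0.le (sq_nonneg (r₁ + r₂)),
      mul_nonneg hν0.le (sq_nonneg r₂), sq_nonneg r₂]
  · rw [max_eq_left h1, max_eq_left h2]
    nlinarith [mul_nonneg hδ0.le (sq_nonneg (r₁ + r₂)),
      mul_nonneg hν0.le (sq_nonneg r₁), mul_nonneg hν0.le (sq_nonneg r₂)]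

/-- Lyapunov drift inequality for the switching two-dimensional ring
system: for `0 < δ < 1`, `c > 0` and `0 < ν < 1 - δ`, there is `β > 0`
such that for all states `(r₁, r₂)` and both cue configurations
`(V₁,V₂) ∈ {(c,0),(0,c)}`, the drift part of the generator applied to
`V(r₁,r₂) = r₁² + r₂²` is at most `-2(1-δ-ν)(r₁²+r₂²) + β`; hence
`ℒV ≤ -αV + β` holds for every `α < 2(1-δ-ν)`. -/
theorem stmt8 (δ c ν : ℝ) (hδ0 : 0 < δ) (hδ1 : δ < 1) (hc : 0 < c)
    (hν0 : 0 < ν) (hν : ν < 1 - δ) :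
    ∃ β > 0, ∀ r₁ r₂ V₁ V₂ : ℝ,
      ((V₁ = c ∧ V₂ = 0) ∨ (V₁ = 0 ∧ V₂ = c)) →
      -2 * (r₁ ^ 2 + r₂ ^ 2) + r₁ * max (δ * (r₁ - r₂) + V₁) 0
          + r₂ * max (δ * (r₂ - r₁) + V₂) 0
        ≤ -2 * (1 - δ - ν) * (r₁ ^ 2 + r₂ ^ 2) + β := by
  refine ⟨c ^ 2 / (2 * ν) + 1, by positivity, ?_⟩
  rintro r₁ r₂ V₁ V₂ (⟨h1, h2⟩ | ⟨h1, h2⟩) <;> rw [h1, h2]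
  · exact stmt8_aux δ c ν r₁ r₂ hδ0 hν0 hc
  · have := stmt8_aux δ c ν r₂ r₁ hδ0 hν0 hc
    linarith
end

section
/- Fix an integer N ≥ 3, set θ_i = 2πi/N for i = 0, …, N−1, and suppose δ > 0 satisfies δ · ∑_{i=1}^{N−1} sin²θ_i < 1. Let V₀ > 0 and V_i = 0 for i ≠ 0, and let r : [0, ∞) → ℝ^N be a differentiable solution of the N-dimensional ring system. Then m_y(t) = ∑_{j=0}^{N−1} r_j(t) sin θ_j converges to 0 as t → ∞. -/
open Filter Real Finset

/-!
The input is invariant under the reflection `i ↦ -i`, which fixes `cos θ_i` and negates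
`sin θ_i`. Since `m_y' = -m_y + ∑ F(u_i) sin θ_i` with `u_i` the total input to unit `i`,
pairing `i` with `-i` and using that `F` is 1-Lipschitz (with `u_i - u_{-i} = 2 δ m_y sin θ_i`)
bounds the forcing term by `c |m_y|`, `c = δ ∑ sin² θ_i < 1`. Hence `m_y m_y' ≤ -(1 - c) m_y²`,
so `exp (2 (1 - c) t) m_y²` is nonincreasing and `m_y` decays exponentially.
-/

section Lyapunov

variable {f f' g : ℝ → ℝ} {a c : ℝ}

theorem antitoneOn_exp_mul_sq (hf : ∀ t ≥ 0, HasDerivAt f (f' t) t)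
    (hdecay : ∀ t ≥ 0, f t * f' t ≤ -a * f t ^ 2) :
    AntitoneOn (fun t => exp (2 * a * t) * f t ^ 2) (Set.Ici 0) := by
  have hderiv : ∀ t ≥ 0, HasDerivAt (fun t => exp (2 * a * t) * f t ^ 2)
      (2 * exp (2 * a * t) * (a * f t ^ 2 + f t * f' t)) t := fun t ht => by
    have hexp : HasDerivAt (fun s => exp (2 * a * s)) (exp (2 * a * t) * (2 * a)) t := by
      simpa using ((hasDerivAt_id t).const_mul (2 * a)).exp
    have hsq : HasDerivAt (fun s => f s ^ 2) (2 * f t * f' t) t := by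
      simpa using (hf t ht).fun_pow 2
    exact (hexp.fun_mul hsq).congr_deriv (by ring)
  refine antitoneOn_of_hasDerivWithinAt_nonpos (convex_Ici 0)
    (fun t ht => (hderiv t ht).continuousAt.continuousWithinAt)
    (fun t ht => (hderiv t (interior_subset ht)).hasDerivWithinAt) fun t ht => ?_
  exact mul_nonpos_of_nonneg_of_nonpos (by positivity)
    (by linarith [hdecay t (interior_subset ht)])

theorem tendsto_zero_of_mul_deriv_le_s11 (ha : 0 < a) (hf : ∀ t ≥ 0, HasDerivAt f (f' t) t)
    (hdecay : ∀ t ≥ 0, f t * f' t ≤ -a * f t ^ 2) : Tendsto f atTop (nhds 0) := by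
  have hsq : ∀ t ≥ 0, f t ^ 2 ≤ f 0 ^ 2 * exp (-(2 * a * t)) := fun t ht => by
    have := antitoneOn_exp_mul_sq hf hdecay Set.self_mem_Ici (Set.mem_Ici.mpr ht) ht
    simp only [mul_zero, exp_zero, one_mul] at this
    rw [exp_neg, ← div_eq_mul_inv, le_div_iff₀ (exp_pos _), mul_comm]
    exact this
  have hbound : Tendsto (fun t => f 0 ^ 2 * exp (-(2 * a * t))) atTop (nhds 0) := by
    simpa using (tendsto_exp_neg_atTop_nhds_zero.comp
      (tendsto_id.const_mul_atTop (by positivity : 0 < 2 * a))).const_mul (f 0 ^ 2)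
  have hsq_tendsto : Tendsto (fun t => f t ^ 2) atTop (nhds 0) :=
    squeeze_zero' (Eventually.of_forall fun t => sq_nonneg _)
      (eventually_ge_atTop 0 |>.mono hsq) hbound
  rw [tendsto_zero_iff_abs_tendsto_zero]
  simpa [Function.comp_def, sqrt_sq_eq_abs] using hsq_tendsto.sqrt

theorem tendsto_zero_of_hasDerivAt_neg_add (hc : c < 1)
    (hf : ∀ t ≥ 0, HasDerivAt f (-f t + g t) t) (hg : ∀ t ≥ 0, |g t| ≤ c * |f t|) :
    Tendsto f atTop (nhds 0) := by
  refine tendsto_zero_of_mul_deriv_le_s11 (sub_pos.mpr hc) hf fun t ht => ?_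
  have hfg : f t * g t ≤ c * f t ^ 2 := calc
    f t * g t ≤ |f t| * |g t| := by rw [← abs_mul]; exact le_abs_self _
    _ ≤ |f t| * (c * |f t|) := mul_le_mul_of_nonneg_left (hg t ht) (abs_nonneg _)
    _ = c * f t ^ 2 := by rw [← sq_abs (f t)]; ring
  linarith

end Lyapunov

theorem abs_sum_le_of_abs_add_perm_le {ι : Type*} [Fintype ι] (σ : Equiv.Perm ι)
    {φ b : ι → ℝ} (h : ∀ j, |φ j + φ (σ j)| ≤ 2 * b j) : |∑ j, φ j| ≤ ∑ j, b j := by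
  have htwice : 2 * ∑ j, φ j = ∑ j, (φ j + φ (σ j)) := by
    rw [sum_add_distrib, Equiv.sum_comp]; ring
  have : 2 * |∑ j, φ j| ≤ 2 * ∑ j, b j := calc
    2 * |∑ j, φ j| = |∑ j, (φ j + φ (σ j))| := by rw [← htwice, abs_mul, abs_two]
    _ ≤ ∑ j, |φ j + φ (σ j)| := abs_sum_le_sum_abs _ _
    _ ≤ ∑ j, 2 * b j := sum_le_sum fun j _ => h j
    _ = 2 * ∑ j, b j := (mul_sum ..).symm
  linarith

section ReflectionSymmetry

variable {ι : Type*} [Fintype ι] {θ : ι → ℝ}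

theorem sum_cos_sub_mul (ρ : ι → ℝ) (x : ℝ) :
    ∑ k, cos (x - θ k) * ρ k =
      cos x * ∑ k, ρ k * cos (θ k) + sin x * ∑ k, ρ k * sin (θ k) := by
  simp only [mul_sum, ← sum_add_distrib, cos_sub]
  exact sum_congr rfl fun k _ => by ring

theorem abs_sum_relu_mul_sin_le (σ : Equiv.Perm ι) {δ : ℝ} {V : ι → ℝ} (hδ : 0 ≤ δ)
    (hsin : ∀ j, sin (θ (σ j)) = -sin (θ j)) (hcos : ∀ j, cos (θ (σ j)) = cos (θ j))
    (hV : ∀ j, V (σ j) = V j) (ρ : ι → ℝ) :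
    |∑ j, max (δ * ∑ k, cos (θ j - θ k) * ρ k + V j) 0 * sin (θ j)| ≤
      δ * (∑ j, sin (θ j) ^ 2) * |∑ j, ρ j * sin (θ j)| := by
  set my := ∑ k, ρ k * sin (θ k)
  set u : ι → ℝ := fun j => δ * ∑ k, cos (θ j - θ k) * ρ k + V j
  have hu : ∀ j, u j - u (σ j) = 2 * δ * sin (θ j) * my := fun j => by
    simp only [u, sum_cos_sub_mul, hsin, hcos, hV]
    ring
  rw [mul_sum, sum_mul]
  refine abs_sum_le_of_abs_add_perm_le σ fun j => ?_
  calc |max (u j) 0 * sin (θ j) + max (u (σ j)) 0 * sin (θ (σ j))|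
      = |sin (θ j)| * |max (u j) 0 - max (u (σ j)) 0| := by
        rw [hsin, ← abs_mul]
        congr 1
        ring
    _ ≤ |sin (θ j)| * |u j - u (σ j)| :=
        mul_le_mul_of_nonneg_left (abs_max_sub_max_le_abs _ _ _) (abs_nonneg _)
    _ = 2 * (δ * sin (θ j) ^ 2 * |my|) := by
        rw [hu, abs_mul, abs_mul, abs_mul, abs_two, abs_of_nonneg hδ, ← sq_abs (sin (θ j))]
        ring

end ReflectionSymmetry

section RingAngles

variable {N : ℕ} [NeZero N]

theorem exists_two_pi_mul_val_neg_div_eq (j : Fin N) :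
    ∃ k : ℤ, 2 * π * (-j : Fin N) / N = -(2 * π * j / N) + k * (2 * π) := by
  have hN : (N : ℝ) ≠ 0 := NeZero.ne _
  rw [Fin.val_neg]
  split_ifs with hj
  · exact ⟨0, by simp [hj]⟩
  · exact ⟨1, by push_cast [Nat.cast_sub j.isLt.le]; field_simp; ring⟩

theorem sin_two_pi_mul_val_neg_div (j : Fin N) :
    sin (2 * π * (-j : Fin N) / N) = -sin (2 * π * j / N) := by
  obtain ⟨k, hk⟩ := exists_two_pi_mul_val_neg_div_eq j
  rw [hk, sin_add_int_mul_two_pi, sin_neg]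

theorem cos_two_pi_mul_val_neg_div (j : Fin N) :
    cos (2 * π * (-j : Fin N) / N) = cos (2 * π * j / N) := by
  obtain ⟨k, hk⟩ := exists_two_pi_mul_val_neg_div_eq j
  rw [hk, cos_add_int_mul_two_pi, cos_neg]

end RingAngles

theorem stmt11 (N : ℕ) (hN : 3 ≤ N) (δ : ℝ) (hδ0 : 0 < δ)
    (θ : Fin N → ℝ) (hθ : ∀ i : Fin N, θ i = 2 * π * i / N)
    (hδ : δ * ∑ i ∈ Finset.univ.erase (⟨0, by omega⟩ : Fin N),
      Real.sin (θ i) ^ 2 < 1)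
    (V : Fin N → ℝ)
    (hVi : ∀ i : Fin N, i ≠ ⟨0, by omega⟩ → V i = 0)
    (r : Fin N → ℝ → ℝ)
    (hr : ∀ i : Fin N, ∀ t ≥ (0 : ℝ), HasDerivAt (r i)
      (-r i t + max (δ * ∑ j, Real.cos (θ i - θ j) * r j t + V i) 0) t) :
    Tendsto (fun t => ∑ j, r j t * Real.sin (θ j)) atTop (nhds 0) := by
  have : NeZero N := ⟨by omega⟩
  have hzero : (⟨0, by omega⟩ : Fin N) = 0 := rfl
  rw [hzero] at hVi hδ
  have hsin : ∀ j, sin (θ (-j)) = -sin (θ j) := fun j => by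
    rw [hθ, hθ, sin_two_pi_mul_val_neg_div]
  have hcos : ∀ j, cos (θ (-j)) = cos (θ j) := fun j => by
    rw [hθ, hθ, cos_two_pi_mul_val_neg_div]
  have hV : ∀ j, V (-j) = V j := fun j => by
    by_cases hj : j = 0
    · rw [hj, neg_zero]
    · rw [hVi _ (neg_ne_zero.mpr hj), hVi _ hj]
  rw [sum_erase _ (by rw [hθ]; simp)] at hδ
  refine tendsto_zero_of_hasDerivAt_neg_add hδ (fun t ht => ?_) fun t _ =>
    abs_sum_relu_mul_sin_le (Equiv.neg _) hδ0.le hsin hcos hV _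
  refine (HasDerivAt.fun_sum fun j _ => (hr j t ht).mul_const _).congr_deriv ?_
  simp only [add_mul, neg_mul, sum_add_distrib, sum_neg_distrib]
end
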